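/- Let c > 0, T > 0, let g : [0,T] → [e, ∞) be continuous and let h : [0,T] → [0, ∞) be integrable. If g(t) ≤ g(0) · exp( c ∫₀^t ( 1 + h(s) ln g(s) ) ds ) for all t ∈ [0,T], then for all t ∈ [0,T], ln g(t) ≤ ( ln g(0) + cT ) · exp( c ∫₀^t h(s) ds ). -/

import Mathlib

/-! Taking logarithms turns the hypothesis into the linear integral inequality
`log g t ≤ (log g 0 + c T) + ∫₀ᵗ c h(s) log g(s) ds`, to which Grönwall's inequality applies.
Since the kernel `c h` is only integrable, Grönwall is proved with absolutely continuous
functions: if `F` is the right-hand side and `K = ∫ c h`, then `F e^{-K}` is absolutely continuous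
with derivative `c h (log g - F) e^{-K} ≤ 0` almost everywhere, so it decreases. -/

open MeasureTheory Real Filter Set

noncomputable section

abbrev E2 := EuclideanSpace ℝ (Fin 2)
abbrev E3 := EuclideanSpace ℝ (Fin 3)

/-- L^∞ norm (supremum of pointwise norms). -/
def supNorm {F : Type*} [NormedAddCommGroup F] (v : E2 → F) : ℝ := ⨆ x, ‖v x‖

/-- Sobolev W^{k,2} norm via iterated derivatives. -/
def sobNorm {F : Type*} [NormedAddCommGroup F] [NormedSpace ℝ F] (k : ℕ) (v : E2 → F) : ℝ :=
  (∑ i ∈ Finset.range (k + 1), ∫ x : E2, ‖iteratedFDeriv ℝ i v x‖ ^ 2) ^ ((1:ℝ)/2)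

/-- partial derivative in the i-th coordinate direction -/
def pd (i : Fin 2) (f : E2 → ℝ) (x : E2) : ℝ := fderiv ℝ f x (EuclideanSpace.single i 1)

/-- two-dimensional Laplacian -/
def lap (f : E2 → ℝ) (x : E2) : ℝ := pd 0 (pd 0 f) x + pd 1 (pd 1 f) x

/-- perpendicular gradient ∇⊥ f = (-∂₂ f, ∂₁ f) -/
def perpGrad (f : E2 → ℝ) (x : E2) : E2 := WithLp.toLp 2 ![-pd 1 f x, pd 0 f x]

/-- advection term u · ∇ f -/
def adv (u : E2 → E2) (f : E2 → ℝ) (x : E2) : ℝ := ∑ i, u x i * pd i f x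

/-- divergence free vector field -/
def divFree (u : E2 → E2) : Prop :=
  ∀ x, (∑ i : Fin 2, fderiv ℝ (fun y => u y i) x (EuclideanSpace.single i 1)) = 0

/-- solution of the screened Poisson equation via the free-space Green's function -/
def greenPsi (w : E2 → ℝ) (x : E2) : ℝ :=
  (1 / (4 * π)) * ∫ y : E2,
    (∫ r : ℝ, Real.exp (-Real.sqrt (‖x - y‖ ^ 2 + r ^ 2)) / Real.sqrt (‖x - y‖ ^ 2 + r ^ 2)) * w y

def isSchwartz (f : E2 → ℝ) : Prop := ∃ φ : SchwartzMap E2 ℝ, ∀ x, f x = φ x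

def lnPlus (a : ℝ) : ℝ := if 1 ≤ a then Real.log a else 0

theorem LipschitzOnWith.comp_absolutelyContinuousOnInterval {X Y : Type*} [PseudoMetricSpace X]
    [PseudoMetricSpace Y] {g : X → Y} {f : ℝ → X} {s : Set X} {K : NNReal} {a b : ℝ}
    (hg : LipschitzOnWith K g s) (hf : AbsolutelyContinuousOnInterval f a b)
    (hfs : MapsTo f (uIcc a b) s) : AbsolutelyContinuousOnInterval (g ∘ f) a b := by
  unfold AbsolutelyContinuousOnInterval at hf ⊢
  apply squeeze_zero' ?_ ?_ (by simpa using hf.const_mul (K : ℝ))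
  · exact Eventually.of_forall fun _ ↦ Finset.sum_nonneg fun _ _ ↦ dist_nonneg
  rw [eventually_inf_principal]
  filter_upwards with ⟨n, I⟩ hnI
  rw [Finset.mul_sum]
  gcongr with i hi
  exact hg.dist_le_mul _ (hfs (hnI.1 i hi).1) _ (hfs (hnI.1 i hi).2)

theorem LocallyLipschitz.comp_absolutelyContinuousOnInterval {X Y : Type*}
    [SeminormedAddCommGroup X] [PseudoMetricSpace Y] {g : X → Y} {f : ℝ → X} {a b : ℝ}
    (hg : LocallyLipschitz g) (hf : AbsolutelyContinuousOnInterval f a b) :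
    AbsolutelyContinuousOnInterval (g ∘ f) a b := by
  obtain ⟨K, hK⟩ := (hg.locallyLipschitzOn (s := f '' uIcc a b)).exists_lipschitzOnWith_of_compact
    (isCompact_uIcc.image_of_continuousOn hf.continuousOn)
  exact hK.comp_absolutelyContinuousOnInterval hf (mapsTo_image f _)

theorem AbsolutelyContinuousOnInterval.le_of_ae_deriv_nonpos {f : ℝ → ℝ} {a b : ℝ}
    (hf : AbsolutelyContinuousOnInterval f a b) (hab : a ≤ b)
    (hderiv : ∀ᵐ x, x ∈ Ioc a b → deriv f x ≤ 0) : f b ≤ f a := by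
  have hnonpos := integral_nonpos_of_ae ((ae_restrict_iff' measurableSet_Ioc).2 hderiv)
  rw [← intervalIntegral.integral_of_le hab, hf.integral_deriv_eq_sub] at hnonpos
  linarith

theorem le_mul_exp_integral_of_le_add_integral {k φ : ℝ → ℝ} {a b B : ℝ} (hab : a ≤ b)
    (hk : IntervalIntegrable k volume a b) (hk0 : ∀ t ∈ Icc a b, 0 ≤ k t)
    (hφ : ContinuousOn φ (Icc a b)) (hle : ∀ t ∈ Icc a b, φ t ≤ B + ∫ s in a..t, k s * φ s) :
    φ b ≤ B * exp (∫ s in a..b, k s) := by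
  set F : ℝ → ℝ := fun t ↦ B + ∫ s in a..t, k s * φ s
  set K : ℝ → ℝ := fun t ↦ ∫ s in a..t, k s
  have hkφ : IntervalIntegrable (fun s ↦ k s * φ s) volume a b :=
    hk.mul_continuousOn (uIcc_of_le hab ▸ hφ)
  have hF : AbsolutelyContinuousOnInterval F a b :=
    (LipschitzWith.const B).lipschitzOnWith.absolutelyContinuousOnInterval.add
      (hkφ.absolutelyContinuousOnInterval_intervalIntegral left_mem_uIcc)
  have hE : AbsolutelyContinuousOnInterval (fun t ↦ exp (-K t)) a b :=
    (contDiff_exp.comp contDiff_neg).locallyLipschitz.comp_absolutelyContinuousOnInterval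
      (hk.absolutelyContinuousOnInterval_intervalIntegral left_mem_uIcc)
  have hderiv : ∀ᵐ x, x ∈ Ioc a b → deriv (fun t ↦ F t * exp (-K t)) x ≤ 0 := by
    filter_upwards [hkφ.ae_hasDerivAt_integral, hk.ae_hasDerivAt_integral] with x hFx hKx hx
    have hx' : x ∈ uIcc a b := uIoc_subset_uIcc (uIoc_of_le hab ▸ hx)
    have hFx' : HasDerivAt F (k x * φ x) x := (hFx hx' a left_mem_uIcc).const_add B
    have hKx' : HasDerivAt K (k x) x := hKx hx' a left_mem_uIcc
    have hH : HasDerivAt (fun t ↦ F t * exp (-K t))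
        (k x * φ x * exp (-K x) + F x * (exp (-K x) * -k x)) x := hFx'.mul hKx'.neg.exp
    have hφF : φ x ≤ F x := hle x (Ioc_subset_Icc_self hx)
    calc deriv (fun t ↦ F t * exp (-K t)) x = k x * (φ x - F x) * exp (-K x) := by
          rw [hH.deriv]; ring
      _ ≤ 0 := mul_nonpos_of_nonpos_of_nonneg
          (mul_nonpos_of_nonneg_of_nonpos (hk0 x (Ioc_subset_Icc_self hx)) (sub_nonpos.2 hφF))
          (exp_pos _).le
  have hdecr : F b * exp (-K b) ≤ B := by
    simpa [F, K] using (hF.fun_mul hE).le_of_ae_deriv_nonpos hab hderiv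
  calc φ b ≤ F b := hle b (right_mem_Icc.2 hab)
    _ = F b * exp (-K b) * exp (K b) := by
      rw [mul_assoc, ← exp_add, neg_add_cancel, exp_zero, mul_one]
    _ ≤ B * exp (K b) := by gcongr

theorem log_gronwall_general
    (c T : ℝ) (g h : ℝ → ℝ)
    (hc : 0 < c)
    (hgcont : ContinuousOn g (Set.Icc 0 T))
    (hge : ∀ t ∈ Set.Icc (0:ℝ) T, Real.exp 1 ≤ g t)
    (hh0 : ∀ t ∈ Set.Icc (0:ℝ) T, 0 ≤ h t)
    (hhint : IntegrableOn h (Set.Icc 0 T))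
    (hbound : ∀ t ∈ Set.Icc (0:ℝ) T,
      g t ≤ g 0 * Real.exp (c * ∫ s in (0:ℝ)..t, (1 + h s * Real.log (g s)))) :
    ∀ t ∈ Set.Icc (0:ℝ) T,
      Real.log (g t) ≤ (Real.log (g 0) + c * T) * Real.exp (c * ∫ s in (0:ℝ)..t, h s) := by
  intro t ht
  have hsub : Icc 0 t ⊆ Icc 0 T := Icc_subset_Icc_right ht.2
  have hg_pos : ∀ s ∈ Icc 0 t, 0 < g s := fun s hs ↦ (exp_pos 1).trans_le (hge s (hsub hs))
  have hlog : ContinuousOn (fun s ↦ log (g s)) (Icc 0 t) :=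
    (hgcont.mono hsub).log fun s hs ↦ (hg_pos s hs).ne'
  have hh : ∀ s ∈ Icc 0 t, IntervalIntegrable h volume 0 s := fun s hs ↦
    (intervalIntegrable_iff_integrableOn_Icc_of_le hs.1).2
      (hhint.mono_set ((Icc_subset_Icc_right hs.2).trans hsub))
  rw [← intervalIntegral.integral_const_mul]
  refine le_mul_exp_integral_of_le_add_integral ht.1 ((hh t (right_mem_Icc.2 ht.1)).const_mul c)
    (fun s hs ↦ mul_nonneg hc.le (hh0 s (hsub hs))) hlog fun s hs ↦ ?_
  have hhlog : IntervalIntegrable (fun r ↦ h r * log (g r)) volume 0 s :=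
    (hh s hs).mul_continuousOn (hlog.mono (uIcc_of_le hs.1 ▸ Icc_subset_Icc_right hs.2))
  calc log (g s) ≤ log (g 0) + c * ∫ r in 0..s, (1 + h r * log (g r)) := by
        have := log_le_log (hg_pos s hs) (hbound s (hsub hs))
        rwa [log_mul (hg_pos 0 (left_mem_Icc.2 ht.1)).ne' (exp_pos _).ne', log_exp] at this
    _ = log (g 0) + c * s + ∫ r in 0..s, c * h r * log (g r) := by
        rw [intervalIntegral.integral_add intervalIntegrable_const hhlog,
          intervalIntegral.integral_const, smul_eq_mul, mul_one, sub_zero]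
        simp only [mul_assoc, intervalIntegral.integral_const_mul]
        ring
    _ ≤ log (g 0) + c * T + ∫ r in 0..s, c * h r * log (g r) := by
        gcongr; exact hs.2.trans ht.2

/-- logarithmic Grönwall-type lemma. -/
theorem log_gronwall
    (c T : ℝ) (g h : ℝ → ℝ)
    (hc : 0 < c) (hT : 0 < T)
    (hgcont : ContinuousOn g (Set.Icc 0 T))
    (hge : ∀ t ∈ Set.Icc (0:ℝ) T, Real.exp 1 ≤ g t)
    (hh0 : ∀ t ∈ Set.Icc (0:ℝ) T, 0 ≤ h t)
    (hhint : IntegrableOn h (Set.Icc 0 T))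
    (hbound : ∀ t ∈ Set.Icc (0:ℝ) T,
      g t ≤ g 0 * Real.exp (c * ∫ s in (0:ℝ)..t, (1 + h s * Real.log (g s)))) :
    ∀ t ∈ Set.Icc (0:ℝ) T,
      Real.log (g t) ≤ (Real.log (g 0) + c * T) * Real.exp (c * ∫ s in (0:ℝ)..t, h s) :=
  log_gronwall_general c T g h hc hgcont hge hh0 hhint hbound
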